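/- Periodic weight bound for Steklov smoothing: if Φ is a Γ-periodic function on ℝ^d with Φ ∈ L₂(Ω), then the operator [Φ^ε] S_ε of multiplication by Φ(x/ε) composed with the Steklov smoothing is bounded on L₂(ℝ^d;ℂⁿ) with ‖[Φ^ε] S_ε‖ ≤ |Ω|^{-1/2} ‖Φ‖_{L₂(Ω)} for all ε > 0. -/

import Mathlib

/-!
By Cauchy–Schwarz, `|S_ε u(x)|²` is at most the average over `z ∈ Ω` of `|u(x − εz)|²`.
Integrating against `|Φ(x/ε)|²`, exchanging the integrals and substituting `x ↦ x + εz`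
turns the weight into `∫_Ω |Φ(x/ε + z)|² dz`, which equals `‖Φ‖²_{L₂(Ω)}` for every `x`
because a translate of a fundamental domain of `Γ` is again one and `|Φ|²` is `Γ`-periodic.
-/

open MeasureTheory

/-- The Steklov smoothing operator `(S_ε u)(x) = |Ω|^{-1} ∫_Ω u(x − εz) dz`. -/
noncomputable def steklov {d n : ℕ} (Ω : Set (EuclideanSpace ℝ (Fin d))) (ε : ℝ)
    (u : EuclideanSpace ℝ (Fin d) → EuclideanSpace ℂ (Fin n))
    (x : EuclideanSpace ℝ (Fin d)) : EuclideanSpace ℂ (Fin n) :=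
  ((volume Ω).toReal)⁻¹ • ∫ z in Ω, u (x - ε • z)

open scoped ENNReal

theorem ofReal_norm_sq {F : Type*} [NormedAddCommGroup F] (a : F) :
    ENNReal.ofReal (‖a‖ ^ 2) = ‖a‖ₑ ^ 2 := by
  rw [ENNReal.ofReal_pow (norm_nonneg a), ofReal_norm]

section Integrals

variable {α F : Type*} [MeasurableSpace α] [NormedAddCommGroup F] {μ : Measure α}

theorem integral_norm_sq_le_toReal_lintegral (f : α → F) :
    ∫ x, ‖f x‖ ^ 2 ∂μ ≤ (∫⁻ x, ‖f x‖ₑ ^ 2 ∂μ).toReal := by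
  refine (Real.le_norm_self _).trans <| (norm_integral_le_lintegral_norm _).trans_eq ?_
  simp only [norm_pow, norm_norm, ofReal_norm_sq]

theorem ofReal_integral_norm_sq {f : α → F} (hf : Integrable (fun x => ‖f x‖ ^ 2) μ) :
    ENNReal.ofReal (∫ x, ‖f x‖ ^ 2 ∂μ) = ∫⁻ x, ‖f x‖ₑ ^ 2 ∂μ := by
  rw [ofReal_integral_eq_lintegral_ofReal hf (.of_forall fun _ => by positivity)]
  simp_rw [ofReal_norm_sq]

theorem lintegral_sq_le_measure_univ_mul {g : α → ℝ≥0∞}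
    (hg : AEMeasurable g μ) : (∫⁻ a, g a ∂μ) ^ 2 ≤ μ Set.univ * ∫⁻ a, g a ^ 2 ∂μ := by
  have h := ENNReal.lintegral_mul_le_Lp_mul_Lq μ Real.HolderConjugate.two_two
    (aemeasurable_const (b := 1)) hg
  simp only [Pi.mul_apply, one_mul, ENNReal.one_rpow, lintegral_const] at h
  refine (pow_le_pow_left' h 2).trans_eq ?_
  rw [mul_pow, ← ENNReal.rpow_natCast (μ Set.univ ^ _) 2,
    ← ENNReal.rpow_natCast ((∫⁻ a, _ ∂μ) ^ _) 2, ← ENNReal.rpow_mul, ← ENNReal.rpow_mul]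
  norm_num

theorem enorm_setAverage_sq_le [NormedSpace ℝ F] {s : Set α} (h0 : μ s ≠ 0) (htop : μ s ≠ ⊤)
    (f : α → F) : ‖⨍ x in s, f x ∂μ‖ₑ ^ 2 ≤ (μ s)⁻¹ * ∫⁻ x in s, ‖f x‖ₑ ^ 2 ∂μ := by
  by_cases hf : AEStronglyMeasurable f (μ.restrict s)
  · have hcs := lintegral_sq_le_measure_univ_mul hf.enorm
    rw [Measure.restrict_apply_univ] at hcs
    calc ‖⨍ x in s, f x ∂μ‖ₑ ^ 2 = ((μ s)⁻¹ * ‖∫ x in s, f x ∂μ‖ₑ) ^ 2 := by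
          rw [setAverage_eq, enorm_smul, Real.enorm_of_nonneg (by positivity), measureReal_def,
            ← ENNReal.toReal_inv, ENNReal.ofReal_toReal (ENNReal.inv_ne_top.2 h0)]
      _ ≤ ((μ s)⁻¹ * ∫⁻ x in s, ‖f x‖ₑ ∂μ) ^ 2 := by
          gcongr; exact enorm_integral_le_lintegral_enorm _
      _ ≤ (μ s)⁻¹ ^ 2 * (μ s * ∫⁻ x in s, ‖f x‖ₑ ^ 2 ∂μ) := by rw [mul_pow]; gcongr
      _ = (μ s)⁻¹ * ∫⁻ x in s, ‖f x‖ₑ ^ 2 ∂μ := by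
          rw [sq, mul_assoc, ← mul_assoc _ (μ s), ENNReal.inv_mul_cancel h0 htop, one_mul]
  · simp [setAverage_eq, integral_non_aestronglyMeasurable hf]

end Integrals

section Translation

variable {α : Type*} [AddCommGroup α] [MeasurableSpace α] [MeasurableAdd α] {μ : Measure α}
  [μ.IsAddLeftInvariant] {L : AddSubgroup α} [Countable L] {Ω : Set α}

theorem MeasureTheory.IsAddFundamentalDomain.setLIntegral_add_left_eq
    (hΩ : IsAddFundamentalDomain L Ω μ) {G : α → ℝ≥0∞} (hG : ∀ γ ∈ L, ∀ x, G (x + γ) = G x)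
    (y : α) : ∫⁻ z in Ω, G (y + z) ∂μ = ∫⁻ z in Ω, G z ∂μ := by
  rw [(measurePreserving_add_left μ y).setLIntegral_comp_emb
      (MeasurableEquiv.addLeft y).measurableEmbedding G Ω]
  refine (hΩ.vadd_of_comm y).setLIntegral_eq hΩ G fun γ x => ?_
  rw [AddSubgroup.vadd_def, vadd_eq_add, add_comm]
  exact hG γ γ.2 x

end Translation

section Haar

variable {E : Type*} [NormedAddCommGroup E] [NormedSpace ℝ E] [FiniteDimensional ℝ E]
  [MeasurableSpace E] [BorelSpace E] (μ : Measure E) [μ.IsAddHaarMeasure]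

theorem quasiMeasurePreserving_sub_smul (ν : Measure E) [SFinite ν] (ε : ℝ) :
    Measure.QuasiMeasurePreserving (fun p : E × E => p.1 - ε • p.2) (μ.prod ν) μ :=
  QuasiMeasurePreserving.prod_of_left (by fun_prop) <| .of_forall fun z =>
    (measurePreserving_sub_right μ (ε • z)).quasiMeasurePreserving

theorem lintegral_mul_lintegral_sub_smul {L : AddSubgroup E} [Countable L] {Ω : Set E}
    (hΩ : IsAddFundamentalDomain L Ω μ) {G : E → ℝ≥0∞} (hG : Measurable G)
    (hper : ∀ γ ∈ L, ∀ x, G (x + γ) = G x) {U : E → ℝ≥0∞} (hU : AEMeasurable U μ)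
    {ε : ℝ} (hε : ε ≠ 0) :
    ∫⁻ x, G (ε⁻¹ • x) * ∫⁻ z in Ω, U (x - ε • z) ∂μ ∂μ
      = (∫⁻ z in Ω, G z ∂μ) * ∫⁻ x, U x ∂μ := by
  have hslice (x : E) : AEMeasurable (fun z => U (x - ε • z)) (μ.restrict Ω) :=
    hU.comp_quasiMeasurePreserving <|
      ((quasiMeasurePreserving_sub_left μ x).comp
        (Measure.quasiMeasurePreserving_smul μ hε)).mono_left
        Measure.restrict_le_self.absolutelyContinuous
  have hmeas₁ : AEMeasurable (Function.uncurry fun x z => G (ε⁻¹ • x) * U (x - ε • z))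
      (μ.prod (μ.restrict Ω)) :=
    (hG.comp (measurable_fst.const_smul ε⁻¹)).aemeasurable.mul
      (hU.comp_quasiMeasurePreserving (quasiMeasurePreserving_sub_smul μ _ ε))
  have hmeas₂ : AEMeasurable (Function.uncurry fun x z => G (ε⁻¹ • x + z) * U x)
      (μ.prod (μ.restrict Ω)) :=
    (hG.comp ((measurable_fst.const_smul ε⁻¹).add measurable_snd)).aemeasurable.mul
      (hU.comp_quasiMeasurePreserving Measure.quasiMeasurePreserving_fst)
  calc ∫⁻ x, G (ε⁻¹ • x) * ∫⁻ z in Ω, U (x - ε • z) ∂μ ∂μ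
      = ∫⁻ x, ∫⁻ z in Ω, G (ε⁻¹ • x) * U (x - ε • z) ∂μ ∂μ := by
        simp_rw [lintegral_const_mul'' _ (hslice _)]
    _ = ∫⁻ z in Ω, ∫⁻ x, G (ε⁻¹ • x) * U (x - ε • z) ∂μ ∂μ := lintegral_lintegral_swap hmeas₁
    _ = ∫⁻ z in Ω, ∫⁻ x, G (ε⁻¹ • x + z) * U x ∂μ ∂μ := by
        refine lintegral_congr fun z => ?_
        rw [← lintegral_add_right_eq_self _ (ε • z)]
        simp [smul_add, smul_smul, hε]
    _ = ∫⁻ x, (∫⁻ z in Ω, G (ε⁻¹ • x + z) ∂μ) * U x ∂μ := by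
        rw [← lintegral_lintegral_swap hmeas₂]
        refine lintegral_congr fun x => ?_
        exact lintegral_mul_const _ (hG.comp (measurable_const_add _))
    _ = (∫⁻ z in Ω, G z ∂μ) * ∫⁻ x, U x ∂μ := by
        simp_rw [hΩ.setLIntegral_add_left_eq hper]
        exact lintegral_const_mul'' _ hU

end Haar

section Steklov

variable {d n : ℕ}

theorem steklov_eq_setAverage (Ω : Set (EuclideanSpace ℝ (Fin d))) (ε : ℝ)
    (u : EuclideanSpace ℝ (Fin d) → EuclideanSpace ℂ (Fin n)) (x : EuclideanSpace ℝ (Fin d)) :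
    steklov Ω ε u x = ⨍ z in Ω, u (x - ε • z) := by
  rw [setAverage_eq]; rfl

theorem lintegral_enorm_smul_steklov_sq_le {L : AddSubgroup (EuclideanSpace ℝ (Fin d))}
    [Countable L] {Ω : Set (EuclideanSpace ℝ (Fin d))}
    (hΩ : IsAddFundamentalDomain L Ω volume) (h0 : volume Ω ≠ 0) (htop : volume Ω ≠ ⊤)
    {Φ : EuclideanSpace ℝ (Fin d) → ℂ} (hΦ : Measurable Φ) (hper : ∀ γ ∈ L, ∀ x, Φ (x + γ) = Φ x)
    {ε : ℝ} (hε : ε ≠ 0) {u : EuclideanSpace ℝ (Fin d) → EuclideanSpace ℂ (Fin n)}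
    (hu : AEStronglyMeasurable u volume) :
    ∫⁻ x, ‖Φ (ε⁻¹ • x) • steklov Ω ε u x‖ₑ ^ 2
      ≤ (volume Ω)⁻¹ * ((∫⁻ z in Ω, ‖Φ z‖ₑ ^ 2) * ∫⁻ x, ‖u x‖ₑ ^ 2) := by
  calc ∫⁻ x, ‖Φ (ε⁻¹ • x) • steklov Ω ε u x‖ₑ ^ 2
      ≤ ∫⁻ x, (volume Ω)⁻¹ * (‖Φ (ε⁻¹ • x)‖ₑ ^ 2 * ∫⁻ z in Ω, ‖u (x - ε • z)‖ₑ ^ 2) := by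
        refine lintegral_mono fun x => ?_
        rw [enorm_smul, mul_pow, steklov_eq_setAverage, mul_left_comm]
        gcongr
        exact enorm_setAverage_sq_le h0 htop _
    _ = (volume Ω)⁻¹ * ((∫⁻ z in Ω, ‖Φ z‖ₑ ^ 2) * ∫⁻ x, ‖u x‖ₑ ^ 2) := by
        rw [lintegral_const_mul' _ _ (ENNReal.inv_ne_top.2 h0),
          lintegral_mul_lintegral_sub_smul volume hΩ (G := fun w => ‖Φ w‖ₑ ^ 2) (by fun_prop)
            (fun γ hγ x => by rw [hper γ hγ x]) (hu.enorm.pow_const 2) hε]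

end Steklov

theorem mul_periodic_steklov_L2_bound_general
    {d n : ℕ} (B : Module.Basis (Fin d) ℝ (EuclideanSpace ℝ (Fin d)))
    (L : Submodule ℤ (EuclideanSpace ℝ (Fin d)))
    (hL : L = Submodule.span ℤ (Set.range ⇑B))
    (Ω : Set (EuclideanSpace ℝ (Fin d)))
    (hfund : IsAddFundamentalDomain L.toAddSubgroup Ω volume)
    (Φ : EuclideanSpace ℝ (Fin d) → ℂ)
    (hΦmeas : Measurable Φ)
    (hΦper : ∀ γ ∈ L, ∀ x, Φ (x + γ) = Φ x)
    (hΦL2 : Integrable (fun x => ‖Φ x‖ ^ 2) (volume.restrict Ω))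
    (ε : ℝ) (hε : 0 < ε)
    (u : EuclideanSpace ℝ (Fin d) → EuclideanSpace ℂ (Fin n))
    (humeas : AEStronglyMeasurable u volume)
    (hu2 : Integrable (fun x => ‖u x‖ ^ 2)) :
    Real.sqrt (∫ x, ‖Φ (ε⁻¹ • x) • steklov Ω ε u x‖ ^ 2)
      ≤ (Real.sqrt ((volume Ω).toReal))⁻¹ * Real.sqrt (∫ x in Ω, ‖Φ x‖ ^ 2) *
          Real.sqrt (∫ x, ‖u x‖ ^ 2) := by
  have : Countable L.toAddSubgroup := by
    subst hL; exact inferInstanceAs (Countable (Submodule.span ℤ (Set.range B)))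
  by_cases hdeg : (volume Ω).toReal = 0
  · -- `|Ω| = 0` or `|Ω| = ∞`: the junk value `(0 : ℝ)⁻¹ = 0` makes `S_ε` vanish.
    have hS : steklov Ω ε u = 0 := by
      ext1 x
      simp [steklov, hdeg]
    simp only [hS, Pi.zero_apply, smul_zero, norm_zero, zero_pow two_ne_zero, integral_zero,
      Real.sqrt_zero]
    positivity
  obtain ⟨h0, htop⟩ := ENNReal.toReal_ne_zero.1 hdeg
  have hbound := lintegral_enorm_smul_steklov_sq_le hfund h0 htop hΦmeas hΦper hε.ne' humeas
  rw [← ofReal_integral_norm_sq hΦL2, ← ofReal_integral_norm_sq hu2] at hbound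
  have hsq : ∫ x, ‖Φ (ε⁻¹ • x) • steklov Ω ε u x‖ ^ 2
      ≤ ((volume Ω).toReal)⁻¹ * ((∫ x in Ω, ‖Φ x‖ ^ 2) * ∫ x, ‖u x‖ ^ 2) := by
    refine (integral_norm_sq_le_toReal_lintegral _).trans ?_
    refine (ENNReal.toReal_mono (by finiteness) hbound).trans_eq ?_
    rw [ENNReal.toReal_mul, ENNReal.toReal_mul, ENNReal.toReal_inv,
      ENNReal.toReal_ofReal (integral_nonneg fun _ => by positivity),
      ENNReal.toReal_ofReal (integral_nonneg fun _ => by positivity)]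
  refine (Real.sqrt_le_sqrt hsq).trans_eq ?_
  rw [Real.sqrt_mul (by positivity), Real.sqrt_mul (by positivity), Real.sqrt_inv, mul_assoc]

/-- **periodic weight bound for Steklov smoothing.** If `Φ` is a
Γ-periodic function with `Φ ∈ L₂(Ω)` (`Ω` a fundamental cell of the lattice `Γ`), then
the operator `[Φ^ε] S_ε` — multiplication by `Φ(x/ε)` composed with the Steklov
smoothing — is bounded on `L₂(ℝ^d;ℂⁿ)` with
`‖[Φ^ε] S_ε u‖_{L₂} ≤ |Ω|^{-1/2} ‖Φ‖_{L₂(Ω)} ‖u‖_{L₂}` for all `ε > 0`. -/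
theorem mul_periodic_steklov_L2_bound
    {d n : ℕ} (B : Module.Basis (Fin d) ℝ (EuclideanSpace ℝ (Fin d)))
    (L : Submodule ℤ (EuclideanSpace ℝ (Fin d)))
    (hL : L = Submodule.span ℤ (Set.range ⇑B))
    (Ω : Set (EuclideanSpace ℝ (Fin d)))
    (hfund : IsAddFundamentalDomain L.toAddSubgroup Ω volume)
    (hvol0 : volume Ω ≠ 0) (hvoltop : volume Ω ≠ ⊤)
    (Φ : EuclideanSpace ℝ (Fin d) → ℂ)
    (hΦmeas : Measurable Φ)
    (hΦper : ∀ γ ∈ L, ∀ x, Φ (x + γ) = Φ x)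
    (hΦL2 : Integrable (fun x => ‖Φ x‖ ^ 2) (volume.restrict Ω))
    (ε : ℝ) (hε : 0 < ε)
    (u : EuclideanSpace ℝ (Fin d) → EuclideanSpace ℂ (Fin n))
    (humeas : AEStronglyMeasurable u volume)
    (hu2 : Integrable (fun x => ‖u x‖ ^ 2)) :
    Real.sqrt (∫ x, ‖Φ (ε⁻¹ • x) • steklov Ω ε u x‖ ^ 2)
      ≤ (Real.sqrt ((volume Ω).toReal))⁻¹ * Real.sqrt (∫ x in Ω, ‖Φ x‖ ^ 2) *
          Real.sqrt (∫ x, ‖u x‖ ^ 2) :=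
  mul_periodic_steklov_L2_bound_general B L hL Ω hfund Φ hΦmeas hΦper hΦL2 ε hε u humeas hu2
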